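/- arXiv:2408.01513 — 3 statements merged into one kernel-verified Lean document; each statement's English description precedes it below -/
import Mathlib

section
/- Fix n ≥ 1 and ν ∈ ℤ^{n+1}. For all a, b ∈ A(ν): if b ≤ a in the merge order, then b ≤ a in the two-sided dictionary order. In other words, the two-sided dictionary order on Lusztig data refines the merge order on Kostant pictures. -/
open Filter

/-- The positive root `α_{ij} = e_i − e_{j+1}` of type `A_n` (indices `0`-based,
so `i j : Fin n` and the root lives in `ℤ^{n+1}`). -/
def posRoot (n : ℕ) (i j : Fin n) : Fin (n + 1) → ℤ := fun t =>
  (if (t : ℕ) = (i : ℕ) then 1 else 0) - (if (t : ℕ) = (j : ℕ) + 1 then 1 else 0)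

/-- A Lusztig datum for `ν`: nonnegative integers `a i j` for pairs `i ≤ j`
(zero for `j < i`) with `∑ a_{ij} α_{ij} = ν`. -/
def IsLusztig {n : ℕ} (ν : Fin (n + 1) → ℤ) (a : Fin n → Fin n → ℕ) : Prop :=
  (∀ i j : Fin n, j < i → a i j = 0) ∧
  ∀ t : Fin (n + 1), (∑ i : Fin n, ∑ j : Fin n, (a i j : ℤ) * posRoot n i j t) = ν t

/-- Merge covering relation on Lusztig data: `b` is covered by `a` iff they agree
except `b i j = a i j − 1`, `b (j+1) k = a (j+1) k − 1`, `b i k = a i k + 1` for a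
single triple `i ≤ j < k`. -/
def MergeCover {n : ℕ} (b a : Fin n → Fin n → ℕ) : Prop :=
  ∃ (i j k : ℕ) (hi : i < n) (hj : j < n) (hj1 : j + 1 < n) (hk : k < n),
    i ≤ j ∧ j < k ∧
    b ⟨i, hi⟩ ⟨j, hj⟩ + 1 = a ⟨i, hi⟩ ⟨j, hj⟩ ∧
    b ⟨j + 1, hj1⟩ ⟨k, hk⟩ + 1 = a ⟨j + 1, hj1⟩ ⟨k, hk⟩ ∧
    b ⟨i, hi⟩ ⟨k, hk⟩ = a ⟨i, hi⟩ ⟨k, hk⟩ + 1 ∧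
    ∀ p q : Fin n, ((p : ℕ), (q : ℕ)) ≠ (i, j) → ((p : ℕ), (q : ℕ)) ≠ (j + 1, k) →
      ((p : ℕ), (q : ℕ)) ≠ (i, k) → b p q = a p q

/-- Strict order on positions `(i,j)`, `i ≤ j`, in the standard reading order
`a_{11}, a_{12}, …, a_{1n}, a_{22}, …`: lexicographic. -/
def PosLt {n : ℕ} (p q : Fin n × Fin n) : Prop :=
  p.1 < q.1 ∨ (p.1 = q.1 ∧ p.2 < q.2)

/-- Two-sided dictionary order on Lusztig data: `a ≤ a'` iff `a = a'` or there are
positions `l ≤ r` with `a'_l > a_l`, `a'_r > a_r`, and `a'_i = a_i` for all positions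
`i < l` and all positions `i > r`. -/
def DictLE {n : ℕ} (a a' : Fin n → Fin n → ℕ) : Prop :=
  a = a' ∨ ∃ l r : Fin n × Fin n, l.1 ≤ l.2 ∧ r.1 ≤ r.2 ∧ (PosLt l r ∨ l = r) ∧
    a l.1 l.2 < a' l.1 l.2 ∧ a r.1 r.2 < a' r.1 r.2 ∧
    (∀ p : Fin n × Fin n, p.1 ≤ p.2 → PosLt p l → a p.1 p.2 = a' p.1 p.2) ∧
    (∀ p : Fin n × Fin n, p.1 ≤ p.2 → PosLt r p → a p.1 p.2 = a' p.1 p.2)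

lemma posLt_iff {n : ℕ} {p q : Fin n × Fin n} :
    PosLt p q ↔ ((p.1 : ℕ) < q.1 ∨ ((p.1 : ℕ) = q.1 ∧ (p.2 : ℕ) < q.2)) := by
  unfold PosLt
  rw [Fin.lt_def, Fin.lt_def, Fin.ext_iff]

def PosLe {n : ℕ} (p q : Fin n × Fin n) : Prop := PosLt p q ∨ p = q

lemma prod_eq_iff {n : ℕ} {p q : Fin n × Fin n} :
    p = q ↔ ((p.1 : ℕ) = q.1 ∧ (p.2 : ℕ) = q.2) := by
  simp [Prod.ext_iff, Fin.ext_iff]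

lemma posLe_trans {n : ℕ} {p q r : Fin n × Fin n} (h1 : PosLe p q) (h2 : PosLe q r) :
    PosLe p r := by
  simp only [PosLe, posLt_iff, prod_eq_iff] at *
  omega

lemma posLt_tri {n : ℕ} (p q : Fin n × Fin n) : PosLt p q ∨ p = q ∨ PosLt q p := by
  simp only [posLt_iff, prod_eq_iff]
  omega

lemma posLt_of_posLt_posLe {n : ℕ} {p q r : Fin n × Fin n} (h1 : PosLt p q)
    (h2 : PosLe q r) : PosLt p r := by
  simp only [PosLe, posLt_iff, prod_eq_iff] at *
  omega

lemma posLt_of_posLe_posLt {n : ℕ} {p q r : Fin n × Fin n} (h1 : PosLe p q)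
    (h2 : PosLt q r) : PosLt p r := by
  simp only [PosLe, posLt_iff, prod_eq_iff] at *
  omega

lemma dictLE_trans {n : ℕ} {a b c : Fin n → Fin n → ℕ} (h1 : DictLE a b)
    (h2 : DictLE b c) : DictLE a c := by
  rcases h1 with rfl | ⟨l1, r1, hl1, hr1, hlr1, hal1, har1, hL1, hR1⟩
  · exact h2
  rcases h2 with rfl | ⟨l2, r2, hl2, hr2, hlr2, hal2, har2, hL2, hR2⟩
  · exact Or.inr ⟨l1, r1, hl1, hr1, hlr1, hal1, har1, hL1, hR1⟩
  obtain ⟨l, hll1, hll2, hl, hal⟩ :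
      ∃ l : Fin n × Fin n, PosLe l l1 ∧ PosLe l l2 ∧ l.1 ≤ l.2 ∧
        a l.1 l.2 < c l.1 l.2 := by
    rcases posLt_tri l1 l2 with h | h | h
    · exact ⟨l1, Or.inr rfl, Or.inl h, hl1, hal1.trans_eq (hL2 l1 hl1 h)⟩
    · subst h; exact ⟨l1, Or.inr rfl, Or.inr rfl, hl1, hal1.trans hal2⟩
    · exact ⟨l2, Or.inl h, Or.inr rfl, hl2, (hL1 l2 hl2 h).trans_lt hal2⟩
  obtain ⟨r, hrr1, hrr2, hr, har⟩ :
      ∃ r : Fin n × Fin n, PosLe r1 r ∧ PosLe r2 r ∧ r.1 ≤ r.2 ∧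
        a r.1 r.2 < c r.1 r.2 := by
    rcases posLt_tri r1 r2 with h | h | h
    · exact ⟨r2, Or.inl h, Or.inr rfl, hr2, (hR1 r2 hr2 h).trans_lt har2⟩
    · subst h; exact ⟨r1, Or.inr rfl, Or.inr rfl, hr1, har1.trans har2⟩
    · exact ⟨r1, Or.inr rfl, Or.inl h, hr1, har1.trans_eq (hR2 r1 hr1 h)⟩
  refine Or.inr ⟨l, r, hl, hr, ?_, hal, har, ?_, ?_⟩
  · exact posLe_trans (posLe_trans hll1 hlr1) hrr1
  · intro p hp hpl
    exact (hL1 p hp (posLt_of_posLt_posLe hpl hll1)).trans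
      (hL2 p hp (posLt_of_posLt_posLe hpl hll2))
  · intro p hp hrp
    exact (hR1 p hp (posLt_of_posLe_posLt hrr1 hrp)).trans
      (hR2 p hp (posLt_of_posLe_posLt hrr2 hrp))

lemma mergeCover_dictLE {n : ℕ} {b a : Fin n → Fin n → ℕ} (h : MergeCover b a) :
    DictLE b a := by
  obtain ⟨i, j, k, hi, hj, hj1, hk, hij, hjk, hb1, hb2, hb3, hrest⟩ := h
  refine Or.inr ⟨(⟨i, hi⟩, ⟨j, hj⟩), (⟨j + 1, hj1⟩, ⟨k, hk⟩),
    Fin.mk_le_mk.mpr hij, Fin.mk_le_mk.mpr (by omega),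
    Or.inl (Or.inl (Fin.mk_lt_mk.mpr (by omega))), hb1 ▸ Nat.lt_succ_self _, hb2 ▸ Nat.lt_succ_self _, ?_, ?_⟩
  · intro p hp hpl
    rw [posLt_iff] at hpl
    simp only [Fin.val_mk] at hpl
    refine hrest p.1 p.2 ?_ ?_ ?_ <;>
      simp only [Ne, Prod.mk.injEq, not_and_or] <;> omega
  · intro p hp hrp
    rw [posLt_iff] at hrp
    simp only [Fin.val_mk] at hrp
    refine hrest p.1 p.2 ?_ ?_ ?_ <;>
      simp only [Ne, Prod.mk.injEq, not_and_or] <;> omega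

/-- The two-sided dictionary order on Lusztig data refines the merge order. -/
theorem dict_refines_merge {n : ℕ} (hn : 1 ≤ n) (ν : Fin (n + 1) → ℤ)
    (a b : Fin n → Fin n → ℕ) (ha : IsLusztig ν a) (hb : IsLusztig ν b)
    (hle : Relation.ReflTransGen MergeCover b a) : DictLE b a := by
  clear ha hb
  induction hle with
  | refl => exact Or.inl rfl
  | tail _ h ih => exact dictLE_trans ih (mergeCover_dictLE h)
end

section
/- Let h = (h_1, …, h_n) ∈ ℤ^n be such that every partial sum η_m = h_1 + ⋯ + h_m (1 ≤ m ≤ n) is nonnegative. The map sending a Tesler matrix A = (a_{ij}) ∈ T(h) to the flow f with f(i,j) = a_{ij} for 1 ≤ i < j ≤ n and f(i, n+1) = a_{ii} for 1 ≤ i ≤ n is a bijection from T(h) onto I(h), and the map sending f ∈ I(h) to the assignment c with c_{i,j−1} = f(i,j) is a bijection from I(h) onto the set of Kostant pictures of height η = (η_1, …, η_n). Consequently |T(h)| = |I(h)| = KPF[η]. -/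
open Filter

/-- A Kostant picture of height `η`. -/
def IsKostant {w : ℕ} (η : Fin w → ℕ) (c : Fin w → Fin w → ℕ) : Prop :=
  (∀ i j : Fin w, j < i → c i j = 0) ∧
  ∀ m : Fin w, (∑ i : Fin w, ∑ j : Fin w, (if i ≤ m ∧ m ≤ j then c i j else 0)) = η m

/-- Kostant's partition function. -/
noncomputable def KPF {w : ℕ} (η : Fin w → ℕ) : ℕ :=
  Set.ncard {c : Fin w → Fin w → ℕ | IsKostant η c}

/-- `L[h,w] = ln KPF[(h,…,h)]` for the constant tuple of length `w`. -/
noncomputable def Lbox (h w : ℕ) : ℝ := Real.log (KPF (fun _ : Fin w => h))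


/-- A generalized Tesler matrix with hook sum vector `h`. -/
def IsTesler {n : ℕ} (h : Fin n → ℤ) (A : Fin n → Fin n → ℕ) : Prop :=
  (∀ i j : Fin n, j < i → A i j = 0) ∧
  ∀ k : Fin n, (∑ i : Fin n, if k ≤ i then (A k i : ℤ) else 0)
    - (∑ i : Fin n, if i < k then (A i k : ℤ) else 0) = h k

/-- An integral flow with net flow `(h, -∑ h)`. -/
def IsFlow {n : ℕ} (h : Fin n → ℤ) (f : Fin (n + 1) → Fin (n + 1) → ℕ) : Prop :=
  (∀ i j : Fin (n + 1), ¬i < j → f i j = 0) ∧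
  ∀ k : Fin n,
    (∑ j : Fin (n + 1), if k.castSucc < j then (f k.castSucc j : ℤ) else 0) -
      (∑ i : Fin (n + 1), if i < k.castSucc then (f i k.castSucc : ℤ) else 0) = h k

/-- The map sending a Tesler matrix `A` to the flow `f` with `f(i,j) = a_{ij}` for
`i < j ≤ n` and `f(i, n+1) = a_{ii}`. -/
def teslerToFlow {n : ℕ} (A : Fin n → Fin n → ℕ) : Fin (n + 1) → Fin (n + 1) → ℕ :=
  fun i j =>
    if hi : (i : ℕ) < n then
      if hj : (j : ℕ) < n then
        (if (i : ℕ) < (j : ℕ) then A ⟨i, hi⟩ ⟨j, hj⟩ else 0)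
      else (if (i : ℕ) < (j : ℕ) then A ⟨i, hi⟩ ⟨i, hi⟩ else 0)
    else 0

/-- The map sending a flow `f` to the assignment `c` with `c_{i,j-1} = f(i,j)`. -/
def flowToKostant {n : ℕ} (f : Fin (n + 1) → Fin (n + 1) → ℕ) : Fin n → Fin n → ℕ :=
  fun i j => if i ≤ j then f i.castSucc j.succ else 0

namespace TFKaux

variable {n : ℕ}

lemma tf_cc (A : Fin n → Fin n → ℕ) (i j : Fin n) :
    teslerToFlow A i.castSucc j.castSucc = if (i : ℕ) < (j : ℕ) then A i j else 0 := by
  simp [teslerToFlow, i.isLt, j.isLt]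

lemma tf_cl (A : Fin n → Fin n → ℕ) (i : Fin n) :
    teslerToFlow A i.castSucc (Fin.last n) = A i i := by
  simp [teslerToFlow, i.isLt]

/-- The total flow across the cut between vertices `< t` and vertices `≥ t`. -/
def Cz (f : Fin (n + 1) → Fin (n + 1) → ℕ) (t : ℕ) : ℤ :=
  ∑ a : Fin (n + 1), ∑ b : Fin (n + 1),
    if (a : ℕ) < t ∧ t ≤ (b : ℕ) then (f a b : ℤ) else 0

/-- Partial sums of the hook sum vector. -/
def Sz (h : Fin n → ℤ) (t : ℕ) : ℤ :=
  ∑ k : Fin n, if (k : ℕ) < t then h k else 0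

lemma cut_step (f : Fin (n + 1) → Fin (n + 1) → ℕ) (t : Fin (n + 1)) :
    Cz f ((t : ℕ) + 1) = Cz f (t : ℕ)
      + (∑ b : Fin (n + 1), if (t : ℕ) < (b : ℕ) then (f t b : ℤ) else 0)
      - (∑ a : Fin (n + 1), if (a : ℕ) < (t : ℕ) then (f a t : ℤ) else 0) := by
  have e1 : ∀ a b : Fin (n + 1),
      (if (a : ℕ) < (t : ℕ) + 1 ∧ (t : ℕ) + 1 ≤ (b : ℕ) then (f a b : ℤ) else 0)
        + (if (a : ℕ) < (t : ℕ) ∧ (b : ℕ) = (t : ℕ) then (f a b : ℤ) else 0)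
      = (if (a : ℕ) < (t : ℕ) ∧ (t : ℕ) ≤ (b : ℕ) then (f a b : ℤ) else 0)
        + (if (a : ℕ) = (t : ℕ) ∧ (t : ℕ) < (b : ℕ) then (f a b : ℤ) else 0) := by
    intro a b
    split_ifs <;> omega
  have e2 : Cz f ((t : ℕ) + 1)
      + (∑ a : Fin (n + 1), ∑ b : Fin (n + 1),
          if (a : ℕ) < (t : ℕ) ∧ (b : ℕ) = (t : ℕ) then (f a b : ℤ) else 0)
      = Cz f (t : ℕ)
      + (∑ a : Fin (n + 1), ∑ b : Fin (n + 1),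
          if (a : ℕ) = (t : ℕ) ∧ (t : ℕ) < (b : ℕ) then (f a b : ℤ) else 0) := by
    unfold Cz
    rw [← Finset.sum_add_distrib, ← Finset.sum_add_distrib]
    refine Finset.sum_congr rfl fun a _ => ?_
    rw [← Finset.sum_add_distrib, ← Finset.sum_add_distrib]
    exact Finset.sum_congr rfl fun b _ => e1 a b
  have eOut : (∑ a : Fin (n + 1), ∑ b : Fin (n + 1),
      if (a : ℕ) = (t : ℕ) ∧ (t : ℕ) < (b : ℕ) then (f a b : ℤ) else 0)
      = ∑ b : Fin (n + 1), if (t : ℕ) < (b : ℕ) then (f t b : ℤ) else 0 := by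
    rw [Finset.sum_eq_single t]
    · simp
    · intro a _ ha
      refine Finset.sum_eq_zero fun b _ => ?_
      have : (a : ℕ) ≠ (t : ℕ) := fun hh => ha (Fin.ext hh)
      simp [this]
    · simp
  have eIn : (∑ a : Fin (n + 1), ∑ b : Fin (n + 1),
      if (a : ℕ) < (t : ℕ) ∧ (b : ℕ) = (t : ℕ) then (f a b : ℤ) else 0)
      = ∑ a : Fin (n + 1), if (a : ℕ) < (t : ℕ) then (f a t : ℤ) else 0 := by
    refine Finset.sum_congr rfl fun a _ => ?_
    rw [Finset.sum_eq_single t]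
    · simp
    · intro b _ hb
      have : (b : ℕ) ≠ (t : ℕ) := fun hh => hb (Fin.ext hh)
      simp [this]
    · simp
  rw [eOut, eIn] at e2
  linarith

lemma Sz_step (h : Fin n → ℤ) (t : Fin n) :
    Sz h ((t : ℕ) + 1) = Sz h (t : ℕ) + h t := by
  have e1 : ∀ k : Fin n, (if (k : ℕ) < (t : ℕ) + 1 then h k else 0)
      = (if (k : ℕ) < (t : ℕ) then h k else 0) + (if k = t then h k else 0) := by
    intro k
    rcases eq_or_ne k t with rfl | hk
    · simp
    · have : (k : ℕ) ≠ (t : ℕ) := fun hh => hk (Fin.ext hh)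
      split_ifs <;> first | (exfalso; omega) | simp
  unfold Sz
  rw [Finset.sum_congr rfl fun k _ => e1 k, Finset.sum_add_distrib,
    Finset.sum_ite_eq' Finset.univ t h]
  simp

/-- Out/in sums in the `IsFlow` form equal those in the `Cz` form. -/
lemma outIn_form (f : Fin (n + 1) → Fin (n + 1) → ℕ) (k : Fin n) :
    (∑ j : Fin (n + 1), if k.castSucc < j then (f k.castSucc j : ℤ) else 0) -
      (∑ i : Fin (n + 1), if i < k.castSucc then (f i k.castSucc : ℤ) else 0)
    = (∑ b : Fin (n + 1), if ((k.castSucc : Fin (n+1)) : ℕ) < (b : ℕ) then (f k.castSucc b : ℤ) else 0)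
      - (∑ a : Fin (n + 1), if (a : ℕ) < ((k.castSucc : Fin (n+1)) : ℕ) then (f a k.castSucc : ℤ) else 0) := by
  simp [Fin.lt_def]

lemma flowEq_iff_cz (h : Fin n → ℤ) (f : Fin (n + 1) → Fin (n + 1) → ℕ) :
    (∀ k : Fin n,
      (∑ j : Fin (n + 1), if k.castSucc < j then (f k.castSucc j : ℤ) else 0) -
        (∑ i : Fin (n + 1), if i < k.castSucc then (f i k.castSucc : ℤ) else 0) = h k)
    ↔ ∀ t : ℕ, t ≤ n → Cz f t = Sz h t := by
  constructor
  · intro hf t ht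
    induction t with
    | zero => simp [Cz, Sz]
    | succ t ih =>
      have htn : t < n := ht
      have hk := hf ⟨t, htn⟩
      rw [outIn_form] at hk
      have hcs : ((⟨t, htn⟩ : Fin n).castSucc : ℕ) = t := rfl
      rw [show (t : ℕ) + 1 = (((⟨t, htn⟩ : Fin n).castSucc : Fin (n+1)) : ℕ) + 1 from rfl,
        cut_step f ((⟨t, htn⟩ : Fin n).castSucc)]
      rw [hcs] at hk ⊢
      rw [ih (by omega), Sz_step h ⟨t, htn⟩]
      linarith
  · intro hC k
    rw [outIn_form]
    have h1 := cut_step f k.castSucc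
    have hcs : ((k.castSucc : Fin (n+1)) : ℕ) = (k : ℕ) := rfl
    rw [hcs] at h1
    rw [hC (k : ℕ) (le_of_lt k.isLt), hC ((k : ℕ) + 1) k.isLt] at h1
    have hk : Sz h ((k : ℕ) + 1) = Sz h (k : ℕ) + h k := Sz_step h k
    rw [hcs]
    linarith

/-- The cut at `m+1` equals the Kostant sum of `flowToKostant f` at `m`. -/
lemma cz_eq_kostant (f : Fin (n + 1) → Fin (n + 1) → ℕ) (m : Fin n) :
    Cz f ((m : ℕ) + 1)
      = ((∑ i : Fin n, ∑ j : Fin n,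
          if i ≤ m ∧ m ≤ j then flowToKostant f i j else 0 : ℕ) : ℤ) := by
  unfold Cz
  push_cast
  rw [Fin.sum_univ_castSucc]
  have hlast : (∑ b : Fin (n + 1),
      if ((Fin.last n : Fin (n+1)) : ℕ) < (m : ℕ) + 1 ∧ (m : ℕ) + 1 ≤ (b : ℕ)
      then (f (Fin.last n) b : ℤ) else 0) = 0 := by
    refine Finset.sum_eq_zero fun b _ => ?_
    have : ¬ ((n : ℕ) < (m : ℕ) + 1) := by have := m.isLt; omega
    simp [this]
  rw [hlast, add_zero]
  refine Finset.sum_congr rfl fun i _ => ?_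
  rw [Fin.sum_univ_succ]
  have h0 : (if ((i.castSucc : Fin (n+1)) : ℕ) < (m : ℕ) + 1 ∧ (m : ℕ) + 1 ≤ ((0 : Fin (n+1)) : ℕ)
      then (f i.castSucc 0 : ℤ) else 0) = 0 := by simp
  rw [h0, zero_add]
  refine Finset.sum_congr rfl fun j _ => ?_
  have hc1 : ((i.castSucc : Fin (n+1)) : ℕ) = (i : ℕ) := rfl
  have hc2 : ((j.succ : Fin (n+1)) : ℕ) = (j : ℕ) + 1 := rfl
  rw [hc1, hc2]
  unfold flowToKostant
  by_cases h1 : i ≤ m ∧ m ≤ j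
  · have hij : i ≤ j := le_trans h1.1 h1.2
    have : (i : ℕ) < (m : ℕ) + 1 ∧ (m : ℕ) + 1 ≤ (j : ℕ) + 1 := by
      constructor <;> [exact Nat.lt_succ_of_le h1.1; exact Nat.succ_le_succ h1.2]
    rw [if_pos this, if_pos h1, if_pos hij]
  · have : ¬ ((i : ℕ) < (m : ℕ) + 1 ∧ (m : ℕ) + 1 ≤ (j : ℕ) + 1) := by
      intro hc
      exact h1 ⟨Nat.lt_succ_iff.mp hc.1, Nat.succ_le_succ_iff.mp hc.2⟩
    rw [if_neg this, if_neg h1]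

/-- The out-sum of `teslerToFlow A` equals the Tesler row sum. -/
lemma out_tf (A : Fin n → Fin n → ℕ) (k : Fin n) :
    (∑ j : Fin (n + 1), if k.castSucc < j then (teslerToFlow A k.castSucc j : ℤ) else 0)
      = ∑ i : Fin n, if k ≤ i then (A k i : ℤ) else 0 := by
  rw [Fin.sum_univ_castSucc]
  have hklt : (k : ℕ) < n := k.isLt
  have hlastcond : k.castSucc < Fin.last n := by
    rw [Fin.lt_def]; exact hklt
  rw [if_pos hlastcond, tf_cl]
  have e1 : ∀ j : Fin n, (if k.castSucc < j.castSucc then (teslerToFlow A k.castSucc j.castSucc : ℤ) else 0)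
      = if k < j then (A k j : ℤ) else 0 := by
    intro j
    rw [tf_cc]
    by_cases hkj : k < j
    · have h2 : k.castSucc < j.castSucc := by rwa [Fin.castSucc_lt_castSucc_iff]
      rw [if_pos h2, if_pos hkj, if_pos (Fin.lt_def.mp hkj)]
    · have h2 : ¬ k.castSucc < j.castSucc := by rwa [Fin.castSucc_lt_castSucc_iff]
      rw [if_neg h2, if_neg hkj]
  rw [Finset.sum_congr rfl fun j _ => e1 j]
  have e2 : ∀ i : Fin n, (if k ≤ i then (A k i : ℤ) else 0)
      = (if k < i then (A k i : ℤ) else 0) + (if i = k then (A k i : ℤ) else 0) := by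
    intro i
    rcases eq_or_ne i k with rfl | hik
    · simp
    · rw [if_neg hik, add_zero]
      by_cases hki : k < i
      · rw [if_pos hki, if_pos (le_of_lt hki)]
      · have : ¬ k ≤ i := fun hle => hki (lt_of_le_of_ne hle (Ne.symm hik))
        rw [if_neg this, if_neg hki]
  rw [Finset.sum_congr rfl fun i _ => e2 i, Finset.sum_add_distrib,
    Finset.sum_ite_eq' Finset.univ k (fun i => (A k i : ℤ))]
  simp

/-- The in-sum of `teslerToFlow A` equals the Tesler column sum. -/
lemma in_tf (A : Fin n → Fin n → ℕ) (k : Fin n) :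
    (∑ i : Fin (n + 1), if i < k.castSucc then (teslerToFlow A i k.castSucc : ℤ) else 0)
      = ∑ i : Fin n, if i < k then (A i k : ℤ) else 0 := by
  rw [Fin.sum_univ_castSucc]
  have hlast : ¬ (Fin.last n < k.castSucc) := by
    rw [Fin.lt_def]
    have := k.isLt
    simp only [Fin.val_last, Fin.coe_castSucc]
    omega
  rw [if_neg hlast, add_zero]
  refine Finset.sum_congr rfl fun i _ => ?_
  rw [tf_cc]
  by_cases hik : i < k
  · have h2 : i.castSucc < k.castSucc := by rwa [Fin.castSucc_lt_castSucc_iff]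
    rw [if_pos h2, if_pos hik, if_pos (Fin.lt_def.mp hik)]
  · have h2 : ¬ i.castSucc < k.castSucc := by rwa [Fin.castSucc_lt_castSucc_iff]
    rw [if_neg h2, if_neg hik]

lemma tf_support (A : Fin n → Fin n → ℕ) :
    ∀ a b : Fin (n + 1), ¬ a < b → teslerToFlow A a b = 0 := by
  intro a b hab
  rw [Fin.lt_def] at hab
  unfold teslerToFlow
  split_ifs <;> first | rfl | (exfalso; omega)

/-- Inverse of `teslerToFlow` on flows. -/
def invTF (f : Fin (n + 1) → Fin (n + 1) → ℕ) : Fin n → Fin n → ℕ :=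
  fun i j => if i < j then f i.castSucc j.castSucc
    else if i = j then f i.castSucc (Fin.last n) else 0

lemma tf_invTF (f : Fin (n + 1) → Fin (n + 1) → ℕ)
    (hf : ∀ a b : Fin (n + 1), ¬ a < b → f a b = 0) :
    teslerToFlow (invTF f) = f := by
  funext a b
  by_cases ha : (a : ℕ) < n
  · have hea : (⟨(a : ℕ), ha⟩ : Fin n).castSucc = a := Fin.ext rfl
    by_cases hb : (b : ℕ) < n
    · have heb : (⟨(b : ℕ), hb⟩ : Fin n).castSucc = b := Fin.ext rfl
      rw [← hea, ← heb, tf_cc]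
      by_cases hab : (a : ℕ) < (b : ℕ)
      · rw [if_pos hab]
        unfold invTF
        rw [if_pos (show (⟨(a : ℕ), ha⟩ : Fin n) < ⟨(b : ℕ), hb⟩ from hab), hea, heb]
      · rw [if_neg hab, hea, heb]
        exact (hf a b (fun hc => hab (Fin.lt_def.mp hc))).symm
    · have heb : b = Fin.last n := by
        apply Fin.ext
        have := b.isLt
        simp only [Fin.val_last]
        omega
      rw [← hea, heb, tf_cl]
      unfold invTF
      rw [if_neg (lt_irrefl _), if_pos rfl, hea]
  · have hea : a = Fin.last n := by
      apply Fin.ext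
      have := a.isLt
      simp only [Fin.val_last]
      omega
    have h1 : teslerToFlow (invTF f) a b = 0 := by
      unfold teslerToFlow
      rw [dif_neg ha]
    have h2 : f a b = 0 := by
      apply hf
      rw [Fin.lt_def, hea]
      have := b.isLt
      simp only [Fin.val_last]
      omega
    rw [h1, h2]

lemma invTF_tf (A : Fin n → Fin n → ℕ) (hA : ∀ i j : Fin n, j < i → A i j = 0) :
    invTF (teslerToFlow A) = A := by
  funext i j
  unfold invTF
  rcases lt_trichotomy i j with hij | rfl | hji
  · rw [if_pos hij, tf_cc, if_pos (Fin.lt_def.mp hij)]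
  · rw [if_neg (lt_irrefl _), if_pos rfl, tf_cl]
  · rw [if_neg (not_lt.mpr (le_of_lt hji)), if_neg (ne_of_gt hji), (hA i j hji).symm]

/-- Inverse of `flowToKostant` on flows. -/
def invFK (c : Fin n → Fin n → ℕ) : Fin (n + 1) → Fin (n + 1) → ℕ :=
  fun a b =>
    if hab : (a : ℕ) < (b : ℕ) then
      c ⟨(a : ℕ), by have := b.isLt; omega⟩ ⟨(b : ℕ) - 1, by have := b.isLt; omega⟩
    else 0

lemma invFK_support (c : Fin n → Fin n → ℕ) :
    ∀ a b : Fin (n + 1), ¬ a < b → invFK c a b = 0 := by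
  intro a b hab
  unfold invFK
  rw [dif_neg (fun hc => hab (Fin.lt_def.mpr hc))]

lemma fk_invFK (c : Fin n → Fin n → ℕ) (hc : ∀ i j : Fin n, j < i → c i j = 0) :
    flowToKostant (invFK c) = c := by
  funext i j
  unfold flowToKostant
  by_cases hij : i ≤ j
  · rw [if_pos hij]
    unfold invFK
    have hab : ((i.castSucc : Fin (n+1)) : ℕ) < ((j.succ : Fin (n+1)) : ℕ) := by
      have : (i : ℕ) ≤ (j : ℕ) := Fin.le_def.mp hij
      simp only [Fin.coe_castSucc, Fin.val_succ]
      omega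
    rw [dif_pos hab]
    congr 1 <;> apply Fin.ext <;> simp
  · rw [if_neg hij]
    exact (hc i j (not_le.mp hij)).symm

lemma invFK_fk (f : Fin (n + 1) → Fin (n + 1) → ℕ)
    (hf : ∀ a b : Fin (n + 1), ¬ a < b → f a b = 0) :
    invFK (flowToKostant f) = f := by
  funext a b
  unfold invFK
  by_cases hab : (a : ℕ) < (b : ℕ)
  · rw [dif_pos hab]
    unfold flowToKostant
    have hle : (⟨(a : ℕ), by have := b.isLt; omega⟩ : Fin n)
        ≤ ⟨(b : ℕ) - 1, by have := b.isLt; omega⟩ := by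
      rw [Fin.le_def]; simp; omega
    rw [if_pos hle]
    congr 1 <;> apply Fin.ext <;> simp <;> omega
  · rw [dif_neg hab]
    exact (hf a b (fun hc => hab (Fin.lt_def.mp hc))).symm

lemma Sz_eq (h : Fin n → ℤ) (m : Fin n) :
    Sz h ((m : ℕ) + 1) = ∑ i : Fin n, if i ≤ m then h i else 0 := by
  refine Finset.sum_congr rfl fun k _ => ?_
  have : (k : ℕ) < (m : ℕ) + 1 ↔ k ≤ m := by
    rw [Fin.le_def]; omega
  by_cases hk : k ≤ m
  · rw [if_pos (this.mpr hk), if_pos hk]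
  · rw [if_neg (fun hc => hk (this.mp hc)), if_neg hk]

end TFKaux

open TFKaux in
/-- The two maps are bijections `T(h) → I(h)` and `I(h) → K[η]`, where
`η_m = h_1 + ⋯ + h_m`; consequently `|T(h)| = |I(h)| = KPF[η]`. -/
theorem tesler_flow_kostant_bijections {n : ℕ} (h : Fin n → ℤ)
    (hpos : ∀ m : Fin n, 0 ≤ ∑ i : Fin n, if i ≤ m then h i else 0) :
    Set.BijOn teslerToFlow {A | IsTesler h A} {f | IsFlow h f} ∧
    Set.BijOn flowToKostant {f | IsFlow h f}
      {c | IsKostant (fun m : Fin n => (∑ i : Fin n, if i ≤ m then h i else 0).toNat) c} ∧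
    Set.ncard {A : Fin n → Fin n → ℕ | IsTesler h A} =
      Set.ncard {f : Fin (n + 1) → Fin (n + 1) → ℕ | IsFlow h f} ∧
    Set.ncard {f : Fin (n + 1) → Fin (n + 1) → ℕ | IsFlow h f} =
      KPF (fun m : Fin n => (∑ i : Fin n, if i ≤ m then h i else 0).toNat) := by
  have hbij1 : Set.BijOn teslerToFlow {A | IsTesler h A} {f | IsFlow h f} := by
    refine ⟨?_, ?_, ?_⟩
    · intro A hA
      refine ⟨tf_support A, fun k => ?_⟩
      rw [out_tf, in_tf]
      exact hA.2 k
    · intro A hA A' hA' he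
      calc A = invTF (teslerToFlow A) := (invTF_tf A hA.1).symm
        _ = invTF (teslerToFlow A') := by rw [he]
        _ = A' := invTF_tf A' hA'.1
    · intro f hf
      refine ⟨invTF f, ?_, tf_invTF f hf.1⟩
      constructor
      · intro i j hji
        unfold invTF
        rw [if_neg (not_lt.mpr (le_of_lt hji)), if_neg (ne_of_gt hji)]
      · intro k
        rw [← out_tf (invTF f) k, ← in_tf (invTF f) k, tf_invTF f hf.1]
        exact hf.2 k
  have key : ∀ f : Fin (n + 1) → Fin (n + 1) → ℕ, IsFlow h f → ∀ m : Fin n,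
      ((∑ i : Fin n, ∑ j : Fin n,
        if i ≤ m ∧ m ≤ j then flowToKostant f i j else 0 : ℕ) : ℤ)
      = ∑ i : Fin n, if i ≤ m then h i else 0 := by
    intro f hf m
    rw [← cz_eq_kostant f m, (flowEq_iff_cz h f).mp hf.2 ((m : ℕ) + 1) m.isLt, Sz_eq]
  have hbij2 : Set.BijOn flowToKostant {f | IsFlow h f}
      {c | IsKostant (fun m : Fin n => (∑ i : Fin n, if i ≤ m then h i else 0).toNat) c} := by
    refine ⟨?_, ?_, ?_⟩
    · intro f hf
      constructor
      · intro i j hji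
        unfold flowToKostant
        rw [if_neg (not_le.mpr hji)]
      · intro m
        have h1 := key f hf m
        show _ = (∑ i : Fin n, if i ≤ m then h i else 0).toNat
        omega
    · intro f hf f' hf' he
      calc f = invFK (flowToKostant f) := (invFK_fk f hf.1).symm
        _ = invFK (flowToKostant f') := by rw [he]
        _ = f' := invFK_fk f' hf'.1
    · intro c hc
      have hckost := fk_invFK c hc.1
      refine ⟨invFK c, ⟨invFK_support c, ?_⟩, hckost⟩
      rw [flowEq_iff_cz h (invFK c)]
      intro t ht
      match t with
      | 0 => simp [Cz, Sz]
      | (s + 1) =>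
        have hs : s < n := ht
        have h1 := cz_eq_kostant (invFK c) ⟨s, hs⟩
        rw [hckost] at h1
        rw [hc.2 ⟨s, hs⟩] at h1
        have h2 : ((((∑ i : Fin n, if i ≤ (⟨s, hs⟩ : Fin n) then h i else 0).toNat) : ℕ) : ℤ)
            = ∑ i : Fin n, if i ≤ (⟨s, hs⟩ : Fin n) then h i else 0 :=
          Int.toNat_of_nonneg (hpos ⟨s, hs⟩)
        rw [h2] at h1
        rw [show (s + 1 : ℕ) = ((⟨s, hs⟩ : Fin n) : ℕ) + 1 from rfl, h1, Sz_eq]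
  refine ⟨hbij1, hbij2, ?_, ?_⟩
  · rw [← hbij1.image_eq]
    exact (Set.ncard_image_of_injOn hbij1.injOn).symm
  · show _ = Set.ncard {c : Fin n → Fin n → ℕ |
      IsKostant (fun m : Fin n => (∑ i : Fin n, if i ≤ m then h i else 0).toNat) c}
    rw [← hbij2.image_eq]
    exact (Set.ncard_image_of_injOn hbij2.injOn).symm
end

section
/- For every n ≥ 0, the number of generalized Tesler matrices with hook sum vector (1, 0, 0, …, 0) ∈ ℤ^{n+1} (a single 1 followed by n zeros) equals 2^n; equivalently, L(1, 0ⁿ) = n·ln 2. -/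
open Filter

/-- `L(h) = ln |T(h)|`. -/
noncomputable def LTes {n : ℕ} (h : Fin n → ℤ) : ℝ :=
  Real.log (Set.ncard {A : Fin n → Fin n → ℕ | IsTesler h A})

namespace TeslerAux

def h1 (n : ℕ) : Fin (n + 1) → ℤ := fun i => if i = 0 then 1 else 0

def Sset (n : ℕ) : Set (Fin (n + 1) → Fin (n + 1) → ℕ) := {A | IsTesler (h1 n) A}

variable {m : ℕ}

lemma rowsum_split (A : Fin (m+2) → Fin (m+2) → ℕ) (k : Fin (m+1)) :
    (∑ i : Fin (m+2), if k.castSucc ≤ i then (A k.castSucc i : ℤ) else 0)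
    = (∑ i : Fin (m+1), if k ≤ i then (A k.castSucc i.castSucc : ℤ) else 0)
      + A k.castSucc (Fin.last (m+1)) := by
  rw [Fin.sum_univ_castSucc]
  simp [Fin.castSucc_le_castSucc_iff, Fin.le_last]

lemma colsum_split (A : Fin (m+2) → Fin (m+2) → ℕ) (k : Fin (m+1)) :
    (∑ i : Fin (m+2), if i < k.castSucc then (A i k.castSucc : ℤ) else 0)
    = ∑ i : Fin (m+1), if i < k then (A i.castSucc k.castSucc : ℤ) else 0 := by
  rw [Fin.sum_univ_castSucc]
  simp [Fin.castSucc_lt_castSucc_iff, (Fin.le_last k.castSucc).not_gt]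

lemma rowsum_last (A : Fin (m+2) → Fin (m+2) → ℕ) :
    (∑ i : Fin (m+2), if Fin.last (m+1) ≤ i then (A (Fin.last (m+1)) i : ℤ) else 0)
    = A (Fin.last (m+1)) (Fin.last (m+1)) := by
  have h : ∀ i : Fin (m+2), (if Fin.last (m+1) ≤ i then (A (Fin.last (m+1)) i : ℤ) else 0)
      = if i = Fin.last (m+1) then (A (Fin.last (m+1)) i : ℤ) else 0 := fun i => by
    simp only [Fin.last_le_iff]
  simp only [h, Finset.sum_ite_eq', Finset.mem_univ, if_true]

lemma colsum_last (A : Fin (m+2) → Fin (m+2) → ℕ) :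
    (∑ i : Fin (m+2), if i < Fin.last (m+1) then (A i (Fin.last (m+1)) : ℤ) else 0)
    = ∑ i : Fin (m+1), (A i.castSucc (Fin.last (m+1)) : ℤ) := by
  rw [Fin.sum_univ_castSucc]
  simp [Fin.castSucc_lt_last]

lemma h1_castSucc (k : Fin (m+1)) : h1 (m+1) k.castSucc = h1 m k := by
  simp [h1, Fin.castSucc_eq_zero_iff]

lemma h1_last : h1 (m+1) (Fin.last (m+1)) = 0 := by
  simp [h1, (Fin.last_pos (n := m+1)).ne']

lemma diag_sum {n : ℕ} {h : Fin n → ℤ} {A : Fin n → Fin n → ℕ}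
    (hA : IsTesler h A) : ∑ k, (A k k : ℤ) = ∑ k, h k := by
  have key : ∑ k : Fin n, ((∑ i : Fin n, if k ≤ i then (A k i : ℤ) else 0)
      - ∑ i : Fin n, if i < k then (A i k : ℤ) else 0) = ∑ k, h k :=
    Finset.sum_congr rfl fun k _ => hA.2 k
  rw [← key, Finset.sum_sub_distrib]
  have hswap : ∑ k : Fin n, ∑ i : Fin n, (if i < k then (A i k : ℤ) else 0)
      = ∑ k : Fin n, ∑ i : Fin n, (if k < i then (A k i : ℤ) else 0) := Finset.sum_comm
  rw [hswap, ← Finset.sum_sub_distrib]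
  refine Finset.sum_congr rfl fun k _ => ?_
  rw [← Finset.sum_sub_distrib]
  have hterm : ∀ i : Fin n, ((if k ≤ i then (A k i : ℤ) else 0) - (if k < i then (A k i : ℤ) else 0))
      = if i = k then (A k i : ℤ) else 0 := by
    intro i
    rcases lt_trichotomy k i with h' | h' | h'
    · simp [h'.le, h', h'.ne']
    · subst h'; simp
    · simp [h'.not_ge, h'.not_gt, h'.ne]
  simp only [hterm]
  simp

lemma sum_h1 (n : ℕ) : ∑ k, h1 n k = 1 := by
  simp [h1]

lemma diag_sum_one {n : ℕ} {A : Fin (n+1) → Fin (n+1) → ℕ} (hA : A ∈ Sset n) :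
    ∑ k, (A k k : ℤ) = 1 := by
  rw [diag_sum hA, sum_h1]

lemma diag_le_one {n : ℕ} {A : Fin (n+1) → Fin (n+1) → ℕ} (hA : A ∈ Sset n)
    (k : Fin (n+1)) : A k k ≤ 1 := by
  have h := diag_sum_one hA
  have := Finset.single_le_sum (f := fun k : Fin (n+1) => (A k k : ℤ))
    (fun i _ => by positivity) (Finset.mem_univ k)
  have h2 : (A k k : ℤ) ≤ 1 := by simpa [h] using this
  exact_mod_cast h2

lemma diag_castSucc_zero {A : Fin (m+2) → Fin (m+2) → ℕ} (hA : A ∈ Sset (m+1))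
    (hL : A (Fin.last (m+1)) (Fin.last (m+1)) = 1) (k : Fin (m+1)) :
    A k.castSucc k.castSucc = 0 := by
  have h := diag_sum_one hA
  rw [Fin.sum_univ_castSucc, hL] at h
  have h0 : ∑ i : Fin (m+1), (A i.castSucc i.castSucc : ℤ) = 0 := by omega
  have := (Finset.sum_eq_zero_iff_of_nonneg
    (fun i _ => by positivity : ∀ i ∈ Finset.univ, (0:ℤ) ≤ (A (Fin.castSucc i) (Fin.castSucc i) : ℤ))).mp h0
    k (Finset.mem_univ k)
  exact_mod_cast this

lemma lastcol_zero {A : Fin (m+2) → Fin (m+2) → ℕ} (hA : A ∈ Sset (m+1))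
    (hL : A (Fin.last (m+1)) (Fin.last (m+1)) = 0) (i : Fin (m+1)) :
    A i.castSucc (Fin.last (m+1)) = 0 := by
  have h := hA.2 (Fin.last (m+1))
  rw [rowsum_last, colsum_last, h1_last, hL] at h
  have h0 : ∑ i : Fin (m+1), (A i.castSucc (Fin.last (m+1)) : ℤ) = 0 := by omega
  have := (Finset.sum_eq_zero_iff_of_nonneg
    (fun i _ => by positivity : ∀ i ∈ Finset.univ, (0:ℤ) ≤ (A (Fin.castSucc i) (Fin.last (m+1)) : ℤ))).mp h0
    i (Finset.mem_univ i)
  exact_mod_cast this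

/-- restriction map, used for the `A last last = 0` part -/
def resMap (A : Fin (m+2) → Fin (m+2) → ℕ) : Fin (m+1) → Fin (m+1) → ℕ :=
  fun i j => A i.castSucc j.castSucc

/-- fold map (last column folded onto the diagonal), for the `A last last = 1` part -/
def foldMap (A : Fin (m+2) → Fin (m+2) → ℕ) : Fin (m+1) → Fin (m+1) → ℕ :=
  fun i j => if i = j then A i.castSucc j.castSucc + A i.castSucc (Fin.last (m+1))
    else A i.castSucc j.castSucc

def ext0 (B : Fin (m+1) → Fin (m+1) → ℕ) : Fin (m+2) → Fin (m+2) → ℕ :=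
  Fin.snoc (fun i => Fin.snoc (B i) 0) (fun _ => 0)

def ext1 (B : Fin (m+1) → Fin (m+1) → ℕ) : Fin (m+2) → Fin (m+2) → ℕ :=
  Fin.snoc (fun i => Fin.snoc (fun j => if i = j then 0 else B i j) (B i i))
    (Fin.snoc (fun _ => 0) 1)

@[simp] lemma ext0_cc (B : Fin (m+1) → Fin (m+1) → ℕ) (i j : Fin (m+1)) :
    ext0 B i.castSucc j.castSucc = B i j := by simp [ext0]
@[simp] lemma ext0_cl (B : Fin (m+1) → Fin (m+1) → ℕ) (i : Fin (m+1)) :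
    ext0 B i.castSucc (Fin.last (m+1)) = 0 := by simp [ext0]
@[simp] lemma ext0_lc (B : Fin (m+1) → Fin (m+1) → ℕ) (j : Fin (m+1)) :
    ext0 B (Fin.last (m+1)) j.castSucc = 0 := by simp [ext0]
@[simp] lemma ext0_ll (B : Fin (m+1) → Fin (m+1) → ℕ) :
    ext0 B (Fin.last (m+1)) (Fin.last (m+1)) = 0 := by simp [ext0]

@[simp] lemma ext1_cc (B : Fin (m+1) → Fin (m+1) → ℕ) (i j : Fin (m+1)) :
    ext1 B i.castSucc j.castSucc = if i = j then 0 else B i j := by simp [ext1]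
@[simp] lemma ext1_cl (B : Fin (m+1) → Fin (m+1) → ℕ) (i : Fin (m+1)) :
    ext1 B i.castSucc (Fin.last (m+1)) = B i i := by simp [ext1]
@[simp] lemma ext1_lc (B : Fin (m+1) → Fin (m+1) → ℕ) (j : Fin (m+1)) :
    ext1 B (Fin.last (m+1)) j.castSucc = 0 := by simp [ext1]
@[simp] lemma ext1_ll (B : Fin (m+1) → Fin (m+1) → ℕ) :
    ext1 B (Fin.last (m+1)) (Fin.last (m+1)) = 1 := by simp [ext1]

lemma resMap_mem {A : Fin (m+2) → Fin (m+2) → ℕ} (hA : A ∈ Sset (m+1))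
    (hL : A (Fin.last (m+1)) (Fin.last (m+1)) = 0) : resMap A ∈ Sset m := by
  constructor
  · intro i j hij
    exact hA.1 _ _ (Fin.castSucc_lt_castSucc_iff.mpr hij)
  · intro k
    have h := hA.2 k.castSucc
    rw [rowsum_split, colsum_split, h1_castSucc, lastcol_zero hA hL k] at h
    simpa [resMap] using h

lemma ext0_mem {B : Fin (m+1) → Fin (m+1) → ℕ} (hB : B ∈ Sset m) :
    ext0 B ∈ Sset (m+1) := by
  constructor
  · intro i j hij
    induction i using Fin.lastCases with
    | last =>
      induction j using Fin.lastCases with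
      | last => exact absurd hij (lt_irrefl _)
      | cast j => simp
    | cast i =>
      induction j using Fin.lastCases with
      | last => exact absurd hij (Fin.castSucc_lt_last i).not_gt
      | cast j => rw [ext0_cc]; exact hB.1 _ _ (Fin.castSucc_lt_castSucc_iff.mp hij)
  · intro k
    induction k using Fin.lastCases with
    | last => rw [rowsum_last, colsum_last, h1_last]; simp
    | cast k =>
      rw [rowsum_split, colsum_split, h1_castSucc, ext0_cl]
      have h := hB.2 k
      simpa using h

lemma foldMap_mem {A : Fin (m+2) → Fin (m+2) → ℕ} (hA : A ∈ Sset (m+1))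
    (hL : A (Fin.last (m+1)) (Fin.last (m+1)) = 1) : foldMap A ∈ Sset m := by
  constructor
  · intro i j hij
    have h : foldMap A i j = A i.castSucc j.castSucc := by simp [foldMap, hij.ne']
    rw [h]
    exact hA.1 _ _ (Fin.castSucc_lt_castSucc_iff.mpr hij)
  · intro k
    have h := hA.2 k.castSucc
    rw [rowsum_split, colsum_split, h1_castSucc] at h
    have row : ∑ i : Fin (m+1), (if k ≤ i then (foldMap A k i : ℤ) else 0)
        = (∑ i : Fin (m+1), if k ≤ i then (A k.castSucc i.castSucc : ℤ) else 0)
          + (A k.castSucc (Fin.last (m+1)) : ℤ) := by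
      have hterm : ∀ i : Fin (m+1), (if k ≤ i then (foldMap A k i : ℤ) else 0)
          = (if k ≤ i then (A k.castSucc i.castSucc : ℤ) else 0)
            + (if i = k then (A k.castSucc (Fin.last (m+1)) : ℤ) else 0) := by
        intro i
        by_cases hik : i = k
        · subst hik
          simp only [le_refl, if_true, foldMap, if_pos rfl]
          push_cast
          ring
        · by_cases hk : k ≤ i
          · simp [foldMap, hk, hik, Ne.symm hik]
          · have : ¬ k = i := fun h' => hk (le_of_eq h')
            simp [hk, hik]
      rw [Finset.sum_congr rfl fun i _ => hterm i, Finset.sum_add_distrib]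
      simp
    have col : ∑ i : Fin (m+1), (if i < k then (foldMap A i k : ℤ) else 0)
        = ∑ i : Fin (m+1), if i < k then (A i.castSucc k.castSucc : ℤ) else 0 := by
      refine Finset.sum_congr rfl fun i _ => ?_
      by_cases hik : i < k
      · simp [foldMap, hik, hik.ne]
      · simp [hik]
    rw [row, col]
    exact h

lemma ext1_mem {B : Fin (m+1) → Fin (m+1) → ℕ} (hB : B ∈ Sset m) :
    ext1 B ∈ Sset (m+1) := by
  constructor
  · intro i j hij
    induction i using Fin.lastCases with
    | last =>
      induction j using Fin.lastCases with
      | last => exact absurd hij (lt_irrefl _)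
      | cast j => rw [ext1_lc]
    | cast i =>
      induction j using Fin.lastCases with
      | last => exact absurd hij (Fin.castSucc_lt_last i).not_gt
      | cast j =>
        have hji : j < i := Fin.castSucc_lt_castSucc_iff.mp hij
        rw [ext1_cc, if_neg hji.ne']
        exact hB.1 _ _ hji
  · intro k
    induction k using Fin.lastCases with
    | last =>
      rw [rowsum_last, colsum_last, h1_last, ext1_ll]
      simp only [ext1_cl]
      rw [diag_sum_one hB]
      norm_num
    | cast k =>
      rw [rowsum_split, colsum_split, h1_castSucc, ext1_cl]
      have h := hB.2 k
      have row : ∑ i : Fin (m+1), (if k ≤ i then (ext1 B k.castSucc i.castSucc : ℤ) else 0)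
          = (∑ i : Fin (m+1), if k ≤ i then (B k i : ℤ) else 0) - (B k k : ℤ) := by
        have hterm : ∀ i : Fin (m+1), (if k ≤ i then (ext1 B k.castSucc i.castSucc : ℤ) else 0)
            = (if k ≤ i then (B k i : ℤ) else 0) - (if i = k then (B k k : ℤ) else 0) := by
          intro i
          rw [ext1_cc]
          by_cases hik : i = k
          · subst hik; simp
          · by_cases hk : k ≤ i
            · simp [hk, hik, Ne.symm hik]
            · simp [hk, hik]
        rw [Finset.sum_congr rfl fun i _ => hterm i, Finset.sum_sub_distrib]
        simp
      have col : ∑ i : Fin (m+1), (if i < k then (ext1 B i.castSucc k.castSucc : ℤ) else 0)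
          = ∑ i : Fin (m+1), if i < k then (B i k : ℤ) else 0 := by
        refine Finset.sum_congr rfl fun i _ => ?_
        rw [ext1_cc]
        by_cases hik : i < k
        · simp [hik, hik.ne]
        · simp [hik]
      rw [row, col]
      rw [← h]
      ring

lemma resMap_ext0 (B : Fin (m+1) → Fin (m+1) → ℕ) : resMap (ext0 B) = B := by
  funext i j
  simp [resMap]

lemma foldMap_ext1 (B : Fin (m+1) → Fin (m+1) → ℕ) : foldMap (ext1 B) = B := by
  funext i j
  by_cases h : i = j
  · subst h; simp [foldMap]
  · simp [foldMap, h]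

lemma ext0_resMap {A : Fin (m+2) → Fin (m+2) → ℕ} (hA : A ∈ Sset (m+1))
    (hL : A (Fin.last (m+1)) (Fin.last (m+1)) = 0) : ext0 (resMap A) = A := by
  funext i j
  induction i using Fin.lastCases with
  | last =>
    induction j using Fin.lastCases with
    | last => rw [ext0_ll, hL]
    | cast j => rw [ext0_lc, hA.1 _ _ (Fin.castSucc_lt_last j)]
  | cast i =>
    induction j using Fin.lastCases with
    | last => rw [ext0_cl, lastcol_zero hA hL i]
    | cast j => rw [ext0_cc]; rfl

lemma ext1_foldMap {A : Fin (m+2) → Fin (m+2) → ℕ} (hA : A ∈ Sset (m+1))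
    (hL : A (Fin.last (m+1)) (Fin.last (m+1)) = 1) : ext1 (foldMap A) = A := by
  funext i j
  induction i using Fin.lastCases with
  | last =>
    induction j using Fin.lastCases with
    | last => rw [ext1_ll, hL]
    | cast j => rw [ext1_lc, hA.1 _ _ (Fin.castSucc_lt_last j)]
  | cast i =>
    induction j using Fin.lastCases with
    | last =>
      rw [ext1_cl]
      simp [foldMap, diag_castSucc_zero hA hL i]
    | cast j =>
      rw [ext1_cc]
      by_cases h : i = j
      · subst h
        rw [if_pos rfl, diag_castSucc_zero hA hL i]
      · rw [if_neg h]
        simp [foldMap, h]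

lemma Sset_zero : Sset 0 = {(fun _ _ => 1 : Fin 1 → Fin 1 → ℕ)} := by
  ext A
  constructor
  · intro hA
    have h := hA.2 0
    simp [h1] at h
    refine Set.mem_singleton_iff.mpr ?_
    funext i j
    have hi : i = 0 := Fin.ext (by omega)
    have hj : j = 0 := Fin.ext (by omega)
    subst hi; subst hj
    exact_mod_cast h
  · intro hA
    rw [Set.mem_singleton_iff] at hA
    subst hA
    refine ⟨fun i j hij => ?_, fun k => ?_⟩
    · have h : i = j := Fin.ext (by omega)
      exact absurd hij (h ▸ lt_irrefl j)
    · have hk : k = 0 := Fin.ext (by omega)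
      subst hk
      simp [h1]

lemma Sfin_card (n : ℕ) : (Sset n).Finite ∧ (Sset n).ncard = 2 ^ n := by
  induction n with
  | zero =>
    rw [Sset_zero]
    exact ⟨Set.finite_singleton _, by simp⟩
  | succ m ih =>
    set S0 : Set (Fin (m+2) → Fin (m+2) → ℕ) :=
      Sset (m+1) ∩ {A | A (Fin.last (m+1)) (Fin.last (m+1)) = 0} with hS0
    set S1 : Set (Fin (m+2) → Fin (m+2) → ℕ) :=
      Sset (m+1) ∩ {A | A (Fin.last (m+1)) (Fin.last (m+1)) = 1} with hS1
    have himg0 : ext0 '' Sset m = S0 := by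
      ext A
      constructor
      · rintro ⟨B, hB, rfl⟩
        exact ⟨ext0_mem hB, ext0_ll B⟩
      · rintro ⟨hA, hL⟩
        exact ⟨resMap A, resMap_mem hA hL, ext0_resMap hA hL⟩
    have himg1 : ext1 '' Sset m = S1 := by
      ext A
      constructor
      · rintro ⟨B, hB, rfl⟩
        exact ⟨ext1_mem hB, ext1_ll B⟩
      · rintro ⟨hA, hL⟩
        exact ⟨foldMap A, foldMap_mem hA hL, ext1_foldMap hA hL⟩
    have hinj0 : Function.Injective (ext0 (m := m)) :=
      Function.LeftInverse.injective resMap_ext0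
    have hinj1 : Function.Injective (ext1 (m := m)) :=
      Function.LeftInverse.injective foldMap_ext1
    have hcup : Sset (m+1) = S0 ∪ S1 := by
      ext A
      constructor
      · intro hA
        rcases Nat.le_one_iff_eq_zero_or_eq_one.mp
          (diag_le_one hA (Fin.last (m+1))) with h | h
        · exact Or.inl ⟨hA, h⟩
        · exact Or.inr ⟨hA, h⟩
      · rintro (⟨h, _⟩ | ⟨h, _⟩) <;> exact h
    have hdisj : Disjoint S0 S1 := by
      rw [Set.disjoint_left]
      rintro A ⟨_, h0⟩ ⟨_, h1⟩
      rw [Set.mem_setOf_eq] at h0 h1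
      omega
    have hf0 : S0.Finite := himg0 ▸ ih.1.image _
    have hf1 : S1.Finite := himg1 ▸ ih.1.image _
    constructor
    · rw [hcup]; exact hf0.union hf1
    · rw [hcup, Set.ncard_union_eq hdisj hf0 hf1, ← himg0, ← himg1,
        Set.ncard_image_of_injective _ hinj0, Set.ncard_image_of_injective _ hinj1, ih.2,
        pow_succ]
      omega

end TeslerAux



/-- The number of generalized Tesler matrices with hook sum vector `(1, 0, …, 0)`
(a single `1` followed by `n` zeros) is `2^n`; equivalently `L(1, 0ⁿ) = n·ln 2`. -/
theorem tesler_one_zeros (n : ℕ) :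
    Set.ncard {A : Fin (n + 1) → Fin (n + 1) → ℕ |
        IsTesler (fun i => if i = 0 then (1 : ℤ) else 0) A} = 2 ^ n ∧
    LTes (fun i : Fin (n + 1) => if i = 0 then (1 : ℤ) else 0) = n * Real.log 2 := by
  have key := TeslerAux.Sfin_card n
  have hset : {A : Fin (n + 1) → Fin (n + 1) → ℕ |
      IsTesler (fun i => if i = 0 then (1 : ℤ) else 0) A} = TeslerAux.Sset n := rfl
  refine ⟨by rw [hset, key.2], ?_⟩
  have h2 : LTes (fun i : Fin (n + 1) => if i = 0 then (1 : ℤ) else 0)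
      = Real.log ((2 ^ n : ℕ) : ℝ) := by
    unfold LTes
    rw [hset, key.2]
  rw [h2]
  push_cast
  rw [Real.log_pow]
end
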